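/- arXiv:1503.06515 — 5 statements merged into one kernel-verified Lean document; each statement's English description precedes it below -/
import Mathlib

section
/- Let α ∈ (0,1), let S be a finite nonempty index set, and let w_k, R_k > 0 for k ∈ S. Then the maximum over γ_k ∈ [0,1] with ∑_{k∈S} γ_k = 1 of ∑_{k∈S} w_k (γ_k R_k)^{1-α}/(1-α) equals (∑_{k∈S} (w_k R_k^{1-α}/(1-α))^{1/α})^α. -/
/-!
With `c k = w k * R k ^ (1 - α) / (1 - α)` the objective is `∑ c k * γ k ^ (1 - α)`. Hölder's
inequality with the conjugate exponents `1 / α` and `1 / (1 - α)` bounds it on the simplex by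
`(∑ c k ^ (1 / α)) ^ α`, and equality holds for the shares `γ k ∝ c k ^ (1 / α)`.
-/

open Real Finset

section

variable {ι : Type*} {S : Finset ι} {α : ℝ} {c : ι → ℝ}

lemma holderConjugate_one_div_one_div_one_sub (hα0 : 0 < α) (hα1 : α < 1) :
    HolderConjugate (1 / α) (1 / (1 - α)) := by
  rw [holderConjugate_iff]
  constructor
  · rw [lt_div_iff₀ hα0]; linarith
  · rw [one_div, one_div, inv_inv, inv_inv]; ring

lemma sum_mul_rpow_one_sub_le (hα0 : 0 < α) (hα1 : α < 1) {γ : ι → ℝ}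
    (hc : ∀ k ∈ S, 0 ≤ c k) (hγ : ∀ k ∈ S, 0 ≤ γ k) (hγ1 : ∑ k ∈ S, γ k = 1) :
    ∑ k ∈ S, c k * γ k ^ (1 - α) ≤ (∑ k ∈ S, c k ^ (1 / α)) ^ α := by
  have holder := inner_le_Lp_mul_Lq_of_nonneg S
    (holderConjugate_one_div_one_div_one_sub hα0 hα1) hc fun k hk => rpow_nonneg (hγ k hk) (1 - α)
  have hγ_pow : ∀ k ∈ S, (γ k ^ (1 - α)) ^ (1 / (1 - α)) = γ k := fun k hk => by
    rw [← rpow_mul (hγ k hk), mul_one_div, div_self (sub_pos.2 hα1).ne', rpow_one]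
  rwa [sum_congr rfl hγ_pow, hγ1, one_rpow, mul_one, one_div_one_div] at holder

noncomputable def powerShare (S : Finset ι) (α : ℝ) (c : ι → ℝ) (k : ι) : ℝ :=
  c k ^ (1 / α) / ∑ j ∈ S, c j ^ (1 / α)

section powerShare

variable (hS : S.Nonempty) (hc : ∀ k ∈ S, 0 < c k)
include hS hc

lemma sum_rpow_pos (x : ℝ) : 0 < ∑ k ∈ S, c k ^ x :=
  sum_pos (fun k hk => rpow_pos_of_pos (hc k hk) x) hS

lemma powerShare_mem_Icc {k : ι} (hk : k ∈ S) : powerShare S α c k ∈ Set.Icc (0 : ℝ) 1 := by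
  have hT := sum_rpow_pos hS hc (1 / α)
  refine ⟨div_nonneg (rpow_nonneg (hc k hk).le _) hT.le, (div_le_one hT).2 ?_⟩
  exact single_le_sum (fun j hj => (rpow_pos_of_pos (hc j hj) _).le) hk

lemma sum_powerShare : ∑ k ∈ S, powerShare S α c k = 1 := by
  simp only [powerShare]
  rw [← sum_div, div_self (sum_rpow_pos hS hc _).ne']

lemma sum_mul_powerShare_rpow (hα0 : 0 < α) :
    ∑ k ∈ S, c k * powerShare S α c k ^ (1 - α) = (∑ k ∈ S, c k ^ (1 / α)) ^ α := by
  set T := ∑ k ∈ S, c k ^ (1 / α)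
  have hT : 0 < T := sum_rpow_pos hS hc _
  have hterm : ∀ k ∈ S, c k * powerShare S α c k ^ (1 - α) = c k ^ (1 / α) * T ^ (α - 1) := by
    intro k hk
    have hck := hc k hk
    rw [powerShare, div_rpow (rpow_nonneg hck.le _) hT.le, ← rpow_mul hck.le, div_eq_mul_inv,
      ← rpow_neg hT.le, neg_sub, ← mul_assoc]
    congr 1
    rw [show 1 / α * (1 - α) = 1 / α - 1 by field_simp, rpow_sub hck, rpow_one]
    field_simp
  rw [sum_congr rfl hterm, ← sum_mul, rpow_sub hT, rpow_one]
  exact mul_div_cancel₀ _ hT.ne'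

end powerShare

theorem isGreatest_sum_mul_rpow_one_sub (hS : S.Nonempty) (hα0 : 0 < α) (hα1 : α < 1)
    (hc : ∀ k ∈ S, 0 < c k) :
    IsGreatest {x : ℝ | ∃ γ : ι → ℝ, (∀ k ∈ S, γ k ∈ Set.Icc (0 : ℝ) 1) ∧
        (∑ k ∈ S, γ k = 1) ∧ x = ∑ k ∈ S, c k * γ k ^ (1 - α)}
      ((∑ k ∈ S, c k ^ (1 / α)) ^ α) := by
  refine ⟨⟨powerShare S α c, fun k hk => powerShare_mem_Icc hS hc hk, sum_powerShare hS hc,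
    (sum_mul_powerShare_rpow hS hc hα0).symm⟩, ?_⟩
  rintro x ⟨γ, hγ, hγ1, rfl⟩
  exact sum_mul_rpow_one_sub_le hα0 hα1 (fun k hk => (hc k hk).le) (fun k hk => (hγ k hk).1) hγ1

end

theorem stmt_3 {ι : Type*} (S : Finset ι) (hS : S.Nonempty) (α : ℝ)
    (hα : α ∈ Set.Ioo (0:ℝ) 1)
    (w R : ι → ℝ) (hw : ∀ k ∈ S, 0 < w k) (hR : ∀ k ∈ S, 0 < R k) :
    IsGreatest {x : ℝ | ∃ γ : ι → ℝ, (∀ k ∈ S, γ k ∈ Set.Icc (0:ℝ) 1) ∧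
        (∑ k ∈ S, γ k = 1) ∧
        x = ∑ k ∈ S, w k * ((γ k * R k) ^ (1 - α) / (1 - α))}
      ((∑ k ∈ S, (w k * (R k) ^ (1 - α) / (1 - α)) ^ (1/α)) ^ α) := by
  obtain ⟨hα0, hα1⟩ := hα
  have hc : ∀ k ∈ S, 0 < w k * R k ^ (1 - α) / (1 - α) := fun k hk =>
    div_pos (mul_pos (hw k hk) (rpow_pos_of_pos (hR k hk) _)) (sub_pos.2 hα1)
  convert isGreatest_sum_mul_rpow_one_sub hS hα0 hα1 hc using 3 with x
  refine exists_congr fun γ => and_congr_right fun hγ => and_congr_right fun _ => ?_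
  have hterm : ∀ k ∈ S, w k * ((γ k * R k) ^ (1 - α) / (1 - α)) =
      w k * R k ^ (1 - α) / (1 - α) * γ k ^ (1 - α) := fun k hk => by
    rw [mul_rpow (hγ k hk).1 (hR k hk).le]; ring
  rw [sum_congr rfl hterm]
end

section
/- Let B be a finite index set and x : B → ℝ_{≥0} with ∑_b x_b = 1. Then the minimum over nonnegative y_b, z_b with z_b ≤ x_b for all b and ∑_b (y_b + z_b) = 1 of the quantity ∑_b [ −(x_b + y_b) ln(x_b + y_b) + (z_b + y_b) ln(z_b + y_b) + (x_b − z_b) ln(x_b − z_b) ] equals −2 ln 2, attained at y_b = x_b and z_b = 0 for all b. -/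
open Real Finset

private lemma key_split (a b : ℝ) (ha : 0 ≤ a) (hb : 0 ≤ b) :
    (a + b) * Real.log (a + b) - (a + b) * Real.log 2
      ≤ a * Real.log a + b * Real.log b := by
  rcases eq_or_lt_of_le (add_nonneg ha hb) with h | h
  · have ha0 : a = 0 := by linarith
    have hb0 : b = 0 := by linarith
    simp [ha0, hb0]
  · have hc := Real.convexOn_mul_log.2 (Set.mem_Ici.mpr ha) (Set.mem_Ici.mpr hb)
      (by norm_num : (0:ℝ) ≤ 1/2) (by norm_num : (0:ℝ) ≤ 1/2) (by norm_num)
    simp only [smul_eq_mul] at hc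
    have heq : (1/2*a + 1/2*b) = (a+b)/2 := by ring
    rw [heq, Real.log_div (ne_of_gt h) two_ne_zero] at hc
    linarith

private lemma key_point (t : ℝ) (ht : 0 ≤ t) :
    -(t + t) * Real.log (t + t) + (0 + t) * Real.log (0 + t)
      + (t - 0) * Real.log (t - 0) = -2 * Real.log 2 * t := by
  rcases eq_or_lt_of_le ht with h | h
  · simp [← h]
  · have : t + t = 2 * t := by ring
    rw [this, Real.log_mul two_ne_zero (ne_of_gt h)]
    ring

theorem stmt_11 {ι : Type*} (B : Finset ι) (x : ι → ℝ)
    (hx : ∀ b ∈ B, 0 ≤ x b) (hsum : ∑ b ∈ B, x b = 1) :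
    IsLeast {v : ℝ | ∃ y z : ι → ℝ,
        (∀ b ∈ B, 0 ≤ y b) ∧ (∀ b ∈ B, 0 ≤ z b ∧ z b ≤ x b) ∧
        (∑ b ∈ B, (y b + z b) = 1) ∧
        v = ∑ b ∈ B, (-(x b + y b) * Real.log (x b + y b)
              + (z b + y b) * Real.log (z b + y b)
              + (x b - z b) * Real.log (x b - z b))}
      (-2 * Real.log 2) ∧
    (∑ b ∈ B, (-(x b + x b) * Real.log (x b + x b)
          + (0 + x b) * Real.log (0 + x b)
          + (x b - 0) * Real.log (x b - 0)) = -2 * Real.log 2) := by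
  have hattain : ∑ b ∈ B, (-(x b + x b) * Real.log (x b + x b)
          + (0 + x b) * Real.log (0 + x b)
          + (x b - 0) * Real.log (x b - 0)) = -2 * Real.log 2 := by
    calc ∑ b ∈ B, (-(x b + x b) * Real.log (x b + x b)
          + (0 + x b) * Real.log (0 + x b)
          + (x b - 0) * Real.log (x b - 0))
        = ∑ b ∈ B, (-2 * Real.log 2 * x b) := by
          exact Finset.sum_congr rfl fun b hb => key_point (x b) (hx b hb)
      _ = -2 * Real.log 2 * ∑ b ∈ B, x b := by rw [Finset.mul_sum]
      _ = -2 * Real.log 2 := by rw [hsum]; ring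
  refine ⟨⟨⟨x, fun _ => 0, fun b hb => hx b hb,
      fun b hb => ⟨le_refl 0, hx b hb⟩, by simpa using hsum, hattain.symm⟩, ?_⟩, hattain⟩
  rintro v ⟨y, z, hy, hz, hyz, rfl⟩
  have hstep : ∀ b ∈ B, -(x b + y b) * Real.log 2
      ≤ -(x b + y b) * Real.log (x b + y b)
        + (z b + y b) * Real.log (z b + y b)
        + (x b - z b) * Real.log (x b - z b) := by
    intro b hb
    have h1 : 0 ≤ z b + y b := add_nonneg (hz b hb).1 (hy b hb)
    have h2 : 0 ≤ x b - z b := sub_nonneg.mpr (hz b hb).2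
    have hk := key_split (z b + y b) (x b - z b) h1 h2
    have he : z b + y b + (x b - z b) = x b + y b := by ring
    rw [he] at hk
    linarith
  have hsum2 : ∑ b ∈ B, (-(x b + y b) * Real.log 2)
      ≤ ∑ b ∈ B, (-(x b + y b) * Real.log (x b + y b)
        + (z b + y b) * Real.log (z b + y b)
        + (x b - z b) * Real.log (x b - z b)) := Finset.sum_le_sum hstep
  have hy1 : ∑ b ∈ B, y b ≤ 1 := by
    rw [← hyz]
    exact Finset.sum_le_sum fun b hb => by linarith [(hz b hb).1]
  have hcalc : ∑ b ∈ B, (-(x b + y b) * Real.log 2)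
      = -(1 + ∑ b ∈ B, y b) * Real.log 2 := by
    rw [← Finset.sum_mul, Finset.sum_neg_distrib, Finset.sum_add_distrib, hsum]
  have hlog2 : 0 < Real.log 2 := Real.log_pos (by norm_num)
  have : -2 * Real.log 2 ≤ -(1 + ∑ b ∈ B, y b) * Real.log 2 := by nlinarith
  linarith [hsum2, hcalc.symm ▸ this]
end

section
/- Let α > 1, B a finite index set, and t : B → ℝ_{≥0}, and set G = ∑_b t_b^α. Then the maximum over nonnegative v_b, u_b with u_b ≤ t_b for all b and ∑_b (v_b + u_b)^α ≤ G of ∑_b [ (v_b + t_b)^α − (v_b + u_b)^α − (t_b − u_b)^α ] equals (2^α − 2) · G, attained at v_b = t_b, u_b = 0. -/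
/-!
Write `a = w + u` and `c = t - u`, so that the summand is `(a + c)^α - a^α - c^α`. Convexity of
`x ↦ x^α` makes its increments grow with the base point, so raising `c` to `t` only increases
`(a + c)^α - c^α`; the power-mean bound `(a + t)^α ≤ 2^(α-1) (a^α + t^α)` then bounds each summand
by `(2^(α-1) - 1)(a^α + t^α)`. Summing and using `∑ a^α ≤ G = ∑ t^α` gives `(2^α - 2) G`, which
`w = t`, `u = 0` attains.
-/

open Real Finset

theorem ConvexOn.map_add_sub_le_map_add_sub {𝕜 : Type*} [Field 𝕜] [LinearOrder 𝕜]
    [IsStrictOrderedRing 𝕜] {s : Set 𝕜} {f : 𝕜 → 𝕜} (hf : ConvexOn 𝕜 s f) {x y z : 𝕜}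
    (hy : y ∈ s) (hzx : z + x ∈ s) (hx : 0 ≤ x) (hyz : y ≤ z) :
    f (y + x) - f y ≤ f (z + x) - f z := by
  rcases (add_nonneg (sub_nonneg.2 hyz) hx).eq_or_lt with hd₀ | hd
  · obtain rfl : x = 0 := by linarith
    obtain rfl : y = z := by linarith
    rfl
  -- `y + x` and `z` are the two convex combinations of `y` and `z + x` with swapped weights.
  set d := z - y + x
  have hab : (z - y) / d + x / d = 1 := by field_simp; ring
  have h₁ := hf.2 hy hzx (div_nonneg (sub_nonneg.2 hyz) hd.le) (div_nonneg hx hd.le) hab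
  have h₂ := hf.2 hy hzx (div_nonneg hx hd.le) (div_nonneg (sub_nonneg.2 hyz) hd.le)
    ((add_comm _ _).trans hab)
  simp only [smul_eq_mul] at h₁ h₂
  have e₁ : (z - y) / d * y + x / d * (z + x) = y + x := by field_simp; ring
  have e₂ : x / d * y + (z - y) / d * (z + x) = z := by field_simp; ring
  rw [e₁] at h₁
  rw [e₂] at h₂
  linear_combination h₁ + h₂ + (f y + f (z + x)) * hab

theorem Real.add_rpow_le_two_rpow_mul {p a b : ℝ} (ha : 0 ≤ a) (hb : 0 ≤ b) (hp : 1 ≤ p) :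
    (a + b) ^ p ≤ 2 ^ (p - 1) * (a ^ p + b ^ p) := by
  lift a to NNReal using ha
  lift b to NNReal using hb
  exact_mod_cast NNReal.rpow_add_le_mul_rpow_add_rpow a b hp

theorem Real.add_rpow_sub_rpow_sub_rpow_le {p a c t : ℝ} (hp : 1 ≤ p) (ha : 0 ≤ a)
    (hc : 0 ≤ c) (hct : c ≤ t) :
    (a + c) ^ p - a ^ p - c ^ p ≤ (2 ^ (p - 1) - 1) * (a ^ p + t ^ p) := by
  have hinc : (c + a) ^ p - c ^ p ≤ (t + a) ^ p - t ^ p :=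
    (convexOn_rpow hp).map_add_sub_le_map_add_sub hc (Set.mem_Ici.2 (by linarith))
      ha hct
  have hmean := add_rpow_le_two_rpow_mul ha (hc.trans hct) hp
  rw [add_comm c, add_comm t] at hinc
  linarith

theorem Real.sum_add_rpow_sub_rpow_sub_rpow_le {ι : Type*} (B : Finset ι) {p : ℝ} (hp : 1 ≤ p)
    {t u w : ι → ℝ} (hw : ∀ b ∈ B, 0 ≤ w b) (hu : ∀ b ∈ B, 0 ≤ u b ∧ u b ≤ t b) :
    ∑ b ∈ B, ((w b + t b) ^ p - (w b + u b) ^ p - (t b - u b) ^ p)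
      ≤ (2 ^ (p - 1) - 1) * (∑ b ∈ B, (w b + u b) ^ p + ∑ b ∈ B, t b ^ p) := by
  rw [← sum_add_distrib, mul_sum]
  refine sum_le_sum fun b hb => ?_
  obtain ⟨hu₀, hut⟩ := hu b hb
  have := add_rpow_sub_rpow_sub_rpow_le hp (add_nonneg (hw b hb) hu₀) (sub_nonneg.2 hut)
    (sub_le_self _ hu₀)
  rwa [add_add_sub_cancel] at this

theorem Real.two_rpow_eq_two_mul_rpow_sub_one (p : ℝ) : (2 : ℝ) ^ p = 2 * 2 ^ (p - 1) := by
  rw [rpow_sub_one two_ne_zero]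
  ring

theorem stmt_12 {ι : Type*} (B : Finset ι) (α : ℝ) (hα : 1 < α)
    (t : ι → ℝ) (ht : ∀ b ∈ B, 0 ≤ t b) (G : ℝ) (hG : G = ∑ b ∈ B, t b ^ α) :
    IsGreatest {v : ℝ | ∃ u w : ι → ℝ,
        (∀ b ∈ B, 0 ≤ w b) ∧ (∀ b ∈ B, 0 ≤ u b ∧ u b ≤ t b) ∧
        (∑ b ∈ B, (w b + u b) ^ α ≤ G) ∧
        v = ∑ b ∈ B, ((w b + t b) ^ α - (w b + u b) ^ α - (t b - u b) ^ α)}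
      ((2 ^ α - 2) * G) ∧
    (∑ b ∈ B, ((t b + t b) ^ α - (t b + 0) ^ α - (t b - 0) ^ α)
      = (2 ^ α - 2) * G) := by
  have hattained : ∑ b ∈ B, ((t b + t b) ^ α - (t b + 0) ^ α - (t b - 0) ^ α)
      = (2 ^ α - 2) * G := by
    rw [hG, mul_sum]
    refine sum_congr rfl fun b hb => ?_
    rw [← two_mul, mul_rpow zero_le_two (ht b hb), add_zero, sub_zero]
    ring
  refine ⟨⟨⟨0, t, ht, fun b hb => ⟨le_rfl, ht b hb⟩, by simp [hG], hattained.symm⟩, ?_⟩,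
    hattained⟩
  rintro v ⟨u, w, hw, hu, hsum, rfl⟩
  have hcoeff : 0 ≤ (2 : ℝ) ^ (α - 1) - 1 :=
    sub_nonneg.2 (one_le_rpow one_le_two (by linarith))
  calc _ ≤ (2 ^ (α - 1) - 1) * (∑ b ∈ B, (w b + u b) ^ α + ∑ b ∈ B, t b ^ α) :=
        sum_add_rpow_sub_rpow_sub_rpow_le B hα.le hw hu
    _ ≤ (2 ^ (α - 1) - 1) * (G + G) := by gcongr; exact hG.ge
    _ = (2 ^ α - 2) * G := by rw [two_rpow_eq_two_mul_rpow_sub_one α]; ring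
end

section
/- Let g be a nonnegative, nondecreasing, submodular set function on a finite ground set Ω with g(∅) = 0, and let Ĝ, G* ⊆ Ω satisfy g(Ĝ) ≥ g(G* ∪ Ĝ) − g(Ĝ \ G*). Then g(Ĝ) ≥ g(G*)/2. -/
open Finset

theorem stmt_13 {ι : Type*} [DecidableEq ι] (Ω : Finset ι)
    (g : Finset ι → ℝ)
    (hsub : ∀ A B : Finset ι, ∀ x, A ⊆ B → B ⊆ Ω → x ∈ Ω → x ∉ B →
      g (insert x B) - g B ≤ g (insert x A) - g A)
    (hnonneg : ∀ A ⊆ Ω, 0 ≤ g A)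
    (hmono : ∀ A B : Finset ι, A ⊆ B → B ⊆ Ω → g A ≤ g B)
    (hnorm : g ∅ = 0)
    (Ghat Gopt : Finset ι) (hGhat : Ghat ⊆ Ω) (hGopt : Gopt ⊆ Ω)
    (hineq : g (Gopt ∪ Ghat) - g (Ghat \ Gopt) ≤ g Ghat) :
    g Gopt / 2 ≤ g Ghat := by
  have h1 : g Gopt ≤ g (Gopt ∪ Ghat) :=
    hmono _ _ subset_union_left (union_subset hGopt hGhat)
  have h2 : g (Ghat \ Gopt) ≤ g Ghat :=
    hmono _ _ (sdiff_subset) hGhat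
  linarith
end

section
/- Let α > 1 and let g(A) = ∑_{b∈B} (∑_{a ∈ A ∩ Ω_b} c(a))^α be defined from a partition Ω = ⋃_{b∈B} Ω_b of a finite ground set and nonnegative weights c. If Ĝ, G* ⊆ Ω satisfy g(Ĝ) ≤ g(G* ∪ Ĝ) − g(Ĝ \ G*), then (3 − 2^α) g(Ĝ) ≤ g(G*). -/
open Real Finset

private lemma rpow_add_le_two_rpow_mul {a b p : ℝ} (ha : 0 ≤ a) (hb : 0 ≤ b) (hp : 1 ≤ p) :
    (a + b) ^ p ≤ 2 ^ (p - 1) * (a ^ p + b ^ p) := by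
  lift a to NNReal using ha
  lift b to NNReal using hb
  have := NNReal.rpow_add_le_mul_rpow_add_rpow a b hp
  exact_mod_cast this

private lemma ptwise {p s t u : ℝ} (hp : 1 < p) (hs : 0 ≤ s) (ht : 0 ≤ t) (hu : 0 ≤ u) :
    (s + t + u) ^ p + 2 ^ (p - 1) * (3 - 2 ^ p) * (s + t) ^ p
      ≤ s ^ p + (s + t) ^ p + 2 ^ (p - 1) * (t + u) ^ p := by
  have hy1 : (1 : ℝ) ≤ 2 ^ (p - 1) := by
    have h := Real.rpow_le_rpow_of_exponent_le one_le_two (show (0:ℝ) ≤ p - 1 by linarith)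
    rwa [Real.rpow_zero] at h
  have h2p : (2 : ℝ) ^ p = 2 * 2 ^ (p - 1) := by
    have h := Real.rpow_add (by norm_num : (0:ℝ) < 2) 1 (p - 1)
    rw [Real.rpow_one] at h
    rw [show (1:ℝ) + (p - 1) = p by ring] at h
    exact h.symm ▸ h
  have hmean : (s + t + u) ^ p ≤ 2 ^ (p - 1) * (s ^ p + (t + u) ^ p) := by
    have h := rpow_add_le_two_rpow_mul hs (add_nonneg ht hu) hp.le
    rwa [← add_assoc] at h
  have hsx : s ^ p ≤ (s + t) ^ p :=
    Real.rpow_le_rpow hs (by linarith) (by linarith)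
  have hxnn : (0 : ℝ) ≤ (s + t) ^ p := Real.rpow_nonneg (by linarith) _
  have hTnn : (0 : ℝ) ≤ (t + u) ^ p := Real.rpow_nonneg (by linarith) _
  rw [h2p]
  nlinarith [hmean, mul_nonneg (sub_nonneg.mpr hy1) (sub_nonneg.mpr hsx),
    mul_nonneg (mul_nonneg (sub_nonneg.mpr hy1) (sub_nonneg.mpr hy1)) hxnn]

theorem stmt_14 {ι κ : Type*} [DecidableEq ι] [DecidableEq κ] [Fintype κ] (Ω : Finset ι)
    (blk : ι → κ) (c : ι → ℝ) (hc : ∀ a ∈ Ω, 0 ≤ c a)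
    (α : ℝ) (hα : 1 < α)
    (g : Finset ι → ℝ)
    (hg : ∀ A, g A = ∑ b : κ, (∑ a ∈ A.filter (fun a => blk a = b), c a) ^ α)
    (Ghat Gopt : Finset ι) (hGhat : Ghat ⊆ Ω) (hGopt : Gopt ⊆ Ω)
    (hineq : g Ghat ≤ g (Gopt ∪ Ghat) - g (Ghat \ Gopt)) :
    (3 - 2 ^ α) * g Ghat ≤ g Gopt := by
  classical
  obtain ⟨s, hs⟩ : ∃ f : κ → ℝ,
      ∀ b, f b = ∑ a ∈ (Ghat \ Gopt).filter (fun a => blk a = b), c a := ⟨_, fun _ => rfl⟩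
  obtain ⟨t, ht⟩ : ∃ f : κ → ℝ,
      ∀ b, f b = ∑ a ∈ (Ghat ∩ Gopt).filter (fun a => blk a = b), c a := ⟨_, fun _ => rfl⟩
  obtain ⟨u, hu⟩ : ∃ f : κ → ℝ,
      ∀ b, f b = ∑ a ∈ (Gopt \ Ghat).filter (fun a => blk a = b), c a := ⟨_, fun _ => rfl⟩
  have hsn : ∀ b, 0 ≤ s b := by
    intro b; rw [hs]
    exact Finset.sum_nonneg fun a ha =>
      hc a (hGhat (Finset.mem_sdiff.mp (Finset.mem_filter.mp ha).1).1)
  have htn : ∀ b, 0 ≤ t b := by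
    intro b; rw [ht]
    exact Finset.sum_nonneg fun a ha =>
      hc a (hGhat (Finset.mem_inter.mp (Finset.mem_filter.mp ha).1).1)
  have hun : ∀ b, 0 ≤ u b := by
    intro b; rw [hu]
    exact Finset.sum_nonneg fun a ha =>
      hc a (hGopt (Finset.mem_sdiff.mp (Finset.mem_filter.mp ha).1).1)
  have split1 : ∀ b, (∑ a ∈ Ghat.filter (fun a => blk a = b), c a) = s b + t b := by
    intro b
    rw [hs, ht, ← Finset.sum_union
      (Finset.disjoint_filter_filter (Finset.disjoint_sdiff_inter Ghat Gopt))]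
    apply Finset.sum_congr _ fun _ _ => rfl
    rw [← Finset.filter_union, Finset.sdiff_union_inter]
  have split2 : ∀ b, (∑ a ∈ Gopt.filter (fun a => blk a = b), c a) = t b + u b := by
    intro b
    rw [ht, hu, ← Finset.sum_union (Finset.disjoint_filter_filter ?_)]
    · apply Finset.sum_congr _ fun _ _ => rfl
      rw [← Finset.filter_union]
      congr 1
      ext a
      simp only [Finset.mem_union, Finset.mem_inter, Finset.mem_sdiff]
      tauto
    · simp only [Finset.disjoint_left, Finset.mem_inter, Finset.mem_sdiff]
      tauto
  have split3 : ∀ b, (∑ a ∈ (Gopt ∪ Ghat).filter (fun a => blk a = b), c a)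
      = s b + t b + u b := by
    intro b
    rw [← split1 b, hu, ← Finset.sum_union (Finset.disjoint_filter_filter Finset.disjoint_sdiff)]
    apply Finset.sum_congr _ fun _ _ => rfl
    rw [← Finset.filter_union]
    congr 1
    ext a
    simp only [Finset.mem_union, Finset.mem_sdiff]
    tauto
  have eGhat : g Ghat = ∑ b : κ, (s b + t b) ^ α := by
    rw [hg]; exact Finset.sum_congr rfl fun b _ => by rw [split1 b]
  have eGopt : g Gopt = ∑ b : κ, (t b + u b) ^ α := by
    rw [hg]; exact Finset.sum_congr rfl fun b _ => by rw [split2 b]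
  have eU : g (Gopt ∪ Ghat) = ∑ b : κ, (s b + t b + u b) ^ α := by
    rw [hg]; exact Finset.sum_congr rfl fun b _ => by rw [split3 b]
  have eS : g (Ghat \ Gopt) = ∑ b : κ, (s b) ^ α := by
    rw [hg]; exact Finset.sum_congr rfl fun b _ => by rw [hs b]
  rw [eGhat, eU, eS] at hineq
  rw [eGhat, eGopt]
  have key := Finset.sum_le_sum
    (fun b (_ : b ∈ (Finset.univ : Finset κ)) => ptwise hα (hsn b) (htn b) (hun b))
  simp only [Finset.sum_add_distrib, ← Finset.mul_sum] at key
  have hy0 : (0 : ℝ) < 2 ^ (α - 1) := Real.rpow_pos_of_pos (by norm_num) _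
  nlinarith [key, hineq, hy0]
end
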